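/- Let R be an algebraic curvature tensor on a real inner product space V (satisfying the standard symmetries and the first Bianchi identity) and let J be an orthogonal complex structure on V such that R(JX, JY, Z, W) = R(X, Y, Z, W) for all X, Y, Z, W. Suppose v ∈ V and I, J, K are orthogonal complex structures with IJ = K = -JI, I² = J² = K² = -Id, and that R is also invariant under I (i.e. R(IX, IY, Z, W) = R(X,Y,Z,W)). Then R(Kv, Iv, Kv, Iv) = R(v, Jv, v, Jv) and R(v, Jv, Kv, Iv) = -R(v, Jv, v, Jv), and hence Q(v∧Jv + Kv∧Iv, v∧Jv + Kv∧Iv) = 0, where Q is the associated symmetric bilinear form on Λ²V defined by Q(X∧Y, Z∧W) = R(X, Y, Z, W). -/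
import Mathlib


open ExteriorAlgebra

open scoped RealInnerProductSpace

/-- The wedge product of two vectors, as an element of the second exterior power. -/
noncomputable def wedge2 {V : Type*} [AddCommGroup V] [Module ℝ V] (u v : V) :
    ⋀[ℝ]^2 V :=
  ⟨ι ℝ u * ι ℝ v, by
    show _ ∈ LinearMap.range (ι ℝ (M := V)) ^ 2
    rw [pow_two]
    exact Submodule.mul_mem_mul (LinearMap.mem_range_self _ u)
      (LinearMap.mem_range_self _ v)⟩

theorem quaternionic_line_curvature_vanishing {V : Type*} [NormedAddCommGroup V]
    [InnerProductSpace ℝ V] (R : V → V → V → V → ℝ)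
    -- multilinearity of the algebraic curvature tensor (negation suffices here)
    (hneg₁ : ∀ x y z w, R (-x) y z w = -R x y z w)
    (hneg₂ : ∀ x y z w, R x (-y) z w = -R x y z w)
    (hneg₃ : ∀ x y z w, R x y (-z) w = -R x y z w)
    (hneg₄ : ∀ x y z w, R x y z (-w) = -R x y z w)
    -- standard symmetries and the first Bianchi identity
    (hasym₁ : ∀ x y z w, R x y z w = -R y x z w)
    (hasym₂ : ∀ x y z w, R x y z w = -R x y w z)
    (hpair : ∀ x y z w, R x y z w = R z w x y)
    (hBianchi : ∀ x y z w, R x y z w + R y z x w + R z x y w = 0)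
    (I J K : V →ₗ[ℝ] V)
    -- orthogonal complex structures
    (hIorth : ∀ x y : V, ⟪I x, I y⟫ = ⟪x, y⟫)
    (hJorth : ∀ x y : V, ⟪J x, J y⟫ = ⟪x, y⟫)
    (hKorth : ∀ x y : V, ⟪K x, K y⟫ = ⟪x, y⟫)
    (hIsq : ∀ x, I (I x) = -x) (hJsq : ∀ x, J (J x) = -x) (hKsq : ∀ x, K (K x) = -x)
    (hIJ : ∀ x, I (J x) = K x) (hJI : ∀ x, J (I x) = -K x)
    -- invariance of R under J and under I
    (hJinv : ∀ x y z w, R (J x) (J y) z w = R x y z w)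
    (hIinv : ∀ x y z w, R (I x) (I y) z w = R x y z w)
    -- the curvature operator Q on Λ²V, bilinear extension of Q(x∧y, z∧w) = R(x,y,z,w)
    (Q : (⋀[ℝ]^2 V) →ₗ[ℝ] (⋀[ℝ]^2 V) →ₗ[ℝ] ℝ)
    (hQ : ∀ x y z w : V, Q (wedge2 x y) (wedge2 z w) = R x y z w)
    (v : V) :
    R (K v) (I v) (K v) (I v) = R v (J v) v (J v) ∧
      R v (J v) (K v) (I v) = -R v (J v) v (J v) ∧
        Q (wedge2 v (J v) + wedge2 (K v) (I v)) (wedge2 v (J v) + wedge2 (K v) (I v)) = 0 := by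
  -- Part 1: R(Kv, Iv, Kv, Iv) = R(v, Jv, v, Jv)
  have h1 : R (K v) (I v) (K v) (I v) = R v (J v) v (J v) := by
    have e1 : R (K v) (I v) (K v) (I v) = R (J v) v (K v) (I v) := by
      rw [← hIinv (J v) v (K v) (I v), hIJ]
    have e2 : R (K v) (I v) (J v) v = R (J v) v (J v) v := by
      rw [← hIinv (J v) v (J v) v, hIJ]
    rw [e1, hpair (J v) v (K v) (I v), e2, hasym₁ (J v) v (J v) v,
      hasym₂ v (J v) (J v) v, neg_neg]
  -- Part 2: R(v, Jv, Kv, Iv) = -R(v, Jv, v, Jv)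
  have h2 : R v (J v) (K v) (I v) = -R v (J v) v (J v) := by
    have e1 : R (I v) (K v) v (J v) = R v (J v) v (J v) := by
      rw [← hIinv v (J v) v (J v), hIJ]
    have e2 : R v (J v) (I v) (K v) = R v (J v) v (J v) := by
      rw [← e1, hpair (I v) (K v) v (J v)]
    rw [hasym₂ v (J v) (K v) (I v), e2]
  -- Part 3
  refine ⟨h1, h2, ?_⟩
  have h3 : R (K v) (I v) v (J v) = -R v (J v) v (J v) := by
    rw [hpair (K v) (I v) v (J v), h2]
  have hexp : Q (wedge2 v (J v) + wedge2 (K v) (I v))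
      (wedge2 v (J v) + wedge2 (K v) (I v)) =
      R v (J v) v (J v) + R v (J v) (K v) (I v) + R (K v) (I v) v (J v)
        + R (K v) (I v) (K v) (I v) := by
    simp only [map_add, LinearMap.add_apply, hQ]
    ring
  rw [hexp, h1, h2, h3]
  ring
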